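/- Let (C_n, p) be a generic framework on the n-cycle in R^1. Then (C_n,p) has a nonzero positive semidefinite equilibrium stress if and only if it is a stretched cycle, i.e., exactly one edge is backwards (or exactly one edge is forwards) in the induced orientation. -/

import Mathlib

/-!
Record a stress on the cycle by its edge weights `ω i`, the stress on the edge `i — i + 1`.
Its stress matrix is `-∑ ω i • (e (i+1) - e i)(e (i+1) - e i)ᵀ` (`e` the standard basis), with
quadratic form `x ↦ -∑ ω i (x (i+1) - x i)²`, and the edge differences of vectors are exactly the vectors of
sum zero. Equilibrium says that the tension `ω i (p (i+1) - p i)` is the same on every edge; it is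
nonzero for a nonzero stress, so the sign of `ω i` is dictated by the direction of edge `i`.
Testing positive semidefiniteness on the indicator of an arc shows that at most one edge has
positive weight, hence exactly one edge points against all the others. Conversely, if edge `j` is
the only backward edge, `ω i = -1 / (p (i+1) - p i)` is a PSD equilibrium stress: this is
Sedrakyan's form of Cauchy-Schwarz on the forward edges.
-/

open Matrix

/-- `Ω` is an equilibrium stress matrix of the one-dimensional framework on the cycle
(with vertices `0, 1, …, n+2` in cyclic order): symmetric, supported on the diagonal and
the cycle edges, with zero row sums and satisfying the equilibrium condition. -/
def IsCycleStressMatrix (n : ℕ) (p : Fin (n + 3) → ℝ)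
    (Ω : Matrix (Fin (n + 3)) (Fin (n + 3)) ℝ) : Prop :=
  Ω.IsHermitian ∧
  (∀ i j, Ω i j ≠ 0 → i = j ∨ j = i + 1 ∨ i = j + 1) ∧
  (∀ i, ∑ j, Ω i j = 0) ∧
  (∀ i, ∑ j, Ω i j * p j = 0)

open Finset

section SumZero
variable {ι : Type*} [Fintype ι] [DecidableEq ι]

theorem sum_single_sub_single (i j : ι) : ∑ k, (Pi.single i 1 - Pi.single j 1 : ι → ℝ) k = 0 := by
  simp

theorem sum_mul_single_sub_single (a : ι → ℝ) (i j : ι) :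
    ∑ k, a k * (Pi.single i 1 - Pi.single j 1 : ι → ℝ) k = a i - a j := by
  simp [mul_sub, sum_sub_distrib, Pi.single_apply]

theorem sum_mul_sq_single_sub_single (a : ι → ℝ) {i j : ι} (hij : i ≠ j) :
    ∑ k, a k * (Pi.single i 1 - Pi.single j 1 : ι → ℝ) k ^ 2 = a i + a j := by
  rw [Fintype.sum_eq_add i j hij fun k hk => by simp [hk.1, hk.2]]
  simp [hij, hij.symm]

theorem forall_sum_mul_eq_zero_iff {a : ι → ℝ} :
    (∀ g : ι → ℝ, ∑ i, g i = 0 → ∑ i, a i * g i = 0) ↔ ∀ i j, a i = a j := by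
  refine ⟨fun h i j => ?_, fun h g hg => ?_⟩
  · rw [← sub_eq_zero, ← sum_mul_single_sub_single]
    exact h _ (sum_single_sub_single i j)
  · cases isEmpty_or_nonempty ι
    · simp
    · obtain ⟨i₀⟩ : Nonempty ι := inferInstance
      simp [h _ i₀, ← mul_sum, hg]

theorem Matrix.ext_of_sum_row_of_offDiag {A B : Matrix ι ι ℝ}
    (hrow : ∀ j, ∑ k, A j k = ∑ k, B j k) (h : ∀ j k, j ≠ k → A j k = B j k) : A = B := by
  ext j k
  obtain rfl | hjk := eq_or_ne j k
  · have := hrow j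
    rw [← add_sum_erase _ _ (mem_univ j), ← add_sum_erase _ _ (mem_univ j),
      sum_congr rfl fun k hk => h j k (ne_of_mem_erase hk).symm] at this
    exact add_right_cancel this
  · exact h j k hjk

end SumZero

section CycleDiff
variable {m : ℕ} {M : Type*} [AddCommGroup M]

def cycleDiff (x : Fin (m + 1) → M) (i : Fin (m + 1)) : M := x (i + 1) - x i

theorem sum_cycleDiff (x : Fin (m + 1) → M) : ∑ i, cycleDiff x i = 0 := by
  simp only [cycleDiff, sum_sub_distrib, sub_eq_zero]
  exact Fintype.sum_equiv (Equiv.addRight 1) _ _ fun _ => rfl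

theorem exists_cycleDiff_eq {g : Fin (m + 1) → M} (hg : ∑ i, g i = 0) :
    ∃ x, cycleDiff x = g := by
  refine ⟨fun i => ∑ k < i, g k, funext fun i => ?_⟩
  obtain ⟨j, rfl⟩ | rfl := Fin.eq_castSucc_or_eq_last i
  · have : Iio j.succ = Iic j.castSucc := by ext; simp [Fin.le_castSucc_iff]
    simp only [cycleDiff, Fin.coeSucc_eq_succ, this, ← sum_Iio_add_eq_sum_Iic,
      add_sub_cancel_left]
  · have : Iio (Fin.last m) = univ.erase (Fin.last m) := by
      ext; simp only [mem_Iio, mem_erase, mem_univ, and_true, Fin.lt_last_iff_ne_last]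
    have h0 : Iio (0 : Fin (m + 1)) = ∅ := by ext; simp
    simp [cycleDiff, Fin.last_add_one, this, h0, sum_erase_eq_sub, hg]

theorem forall_cycleDiff_iff {P : (Fin (m + 1) → M) → Prop} :
    (∀ x, P (cycleDiff x)) ↔ ∀ g, ∑ i, g i = 0 → P g := by
  refine ⟨fun h g hg => ?_, fun h x => h _ (sum_cycleDiff x)⟩
  obtain ⟨x, rfl⟩ := exists_cycleDiff_eq hg
  exact h x

end CycleDiff

section CycleMatrix
variable {m : ℕ}

def edgeVec (i : Fin (m + 1)) : Fin (m + 1) → ℝ := Pi.single (i + 1) 1 - Pi.single i 1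

def cycleMatrix (ω : Fin (m + 1) → ℝ) : Matrix (Fin (m + 1)) (Fin (m + 1)) ℝ :=
  -∑ i, ω i • vecMulVec (edgeVec i) (edgeVec i)

theorem edgeVec_dotProduct (i : Fin (m + 1)) (x : Fin (m + 1) → ℝ) :
    edgeVec i ⬝ᵥ x = cycleDiff x i := by
  simp [edgeVec, cycleDiff, sub_dotProduct]

theorem edgeVec_apply_ne_zero {i j : Fin (m + 1)} (h : edgeVec i j ≠ 0) : j = i ∨ j = i + 1 := by
  by_contra! hj
  simp [edgeVec, hj.1, hj.2] at h

theorem cycleMatrix_isSymm (ω : Fin (m + 1) → ℝ) : (cycleMatrix ω).IsSymm := by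
  simp [IsSymm, cycleMatrix, transpose_sum, transpose_vecMulVec]

theorem cycleMatrix_apply (ω : Fin (m + 1) → ℝ) (j k : Fin (m + 1)) :
    cycleMatrix ω j k = -∑ i, ω i * (edgeVec i j * edgeVec i k) := by
  simp [cycleMatrix, Matrix.sum_apply, vecMulVec_apply]

theorem cycleMatrix_mulVec (ω y : Fin (m + 1) → ℝ) :
    cycleMatrix ω *ᵥ y = -∑ i, (ω i * cycleDiff y i) • edgeVec i := by
  simp [cycleMatrix, neg_mulVec, sum_mulVec, smul_mulVec, vecMulVec_mulVec, edgeVec_dotProduct,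
    mul_smul]

theorem dotProduct_cycleMatrix_mulVec (ω x y : Fin (m + 1) → ℝ) :
    x ⬝ᵥ cycleMatrix ω *ᵥ y = -∑ i, ω i * (cycleDiff x i * cycleDiff y i) := by
  rw [cycleMatrix_mulVec, dotProduct_comm, neg_dotProduct, sum_dotProduct]
  simp only [smul_dotProduct, edgeVec_dotProduct, smul_eq_mul, mul_assoc, mul_comm (cycleDiff y _)]

theorem sum_cycleMatrix_apply (ω : Fin (m + 1) → ℝ) (j : Fin (m + 1)) :
    ∑ k, cycleMatrix ω j k = 0 := by
  simpa [mulVec, dotProduct, cycleDiff] using congrFun (cycleMatrix_mulVec ω 1) j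

theorem cycleMatrix_apply_ne_zero {ω : Fin (m + 1) → ℝ} {j k : Fin (m + 1)}
    (h : cycleMatrix ω j k ≠ 0) : j = k ∨ k = j + 1 ∨ j = k + 1 := by
  rw [cycleMatrix_apply, neg_ne_zero] at h
  obtain ⟨i, -, hi⟩ := exists_ne_zero_of_sum_ne_zero h
  simp only [ne_eq, mul_eq_zero, not_or] at hi
  rcases edgeVec_apply_ne_zero hi.2.1 with rfl | rfl <;>
    rcases edgeVec_apply_ne_zero hi.2.2 with rfl | rfl <;> simp

theorem cycleMatrix_mulVec_eq_zero_iff {ω y : Fin (m + 1) → ℝ} :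
    cycleMatrix ω *ᵥ y = 0 ↔ ∀ i j, ω i * cycleDiff y i = ω j * cycleDiff y j := by
  rw [← dotProduct_eq_zero_iff, ← forall_sum_mul_eq_zero_iff, ← forall_cycleDiff_iff]
  simp only [dotProduct_comm _ (_ : Fin (m + 1) → ℝ), dotProduct_cycleMatrix_mulVec, neg_eq_zero,
    mul_assoc, mul_comm (cycleDiff y _)]

theorem posSemidef_cycleMatrix_iff {ω : Fin (m + 1) → ℝ} :
    (cycleMatrix ω).PosSemidef ↔ ∀ g : Fin (m + 1) → ℝ, ∑ i, g i = 0 → ∑ i, ω i * g i ^ 2 ≤ 0 := by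
  rw [posSemidef_iff_dotProduct_mulVec, ← forall_cycleDiff_iff]
  simp [cycleMatrix_isSymm, dotProduct_cycleMatrix_mulVec, sq]

end CycleMatrix

theorem Fin.add_one_add_one_ne {n : ℕ} (i : Fin (n + 3)) : i + 1 + 1 ≠ i := by
  rw [add_assoc, Ne, add_eq_left, Fin.ext_iff]
  simp [Fin.val_add, Nat.mod_eq_of_lt (show 2 < n + 3 by omega)]

theorem cycleMatrix_apply_add_one {n : ℕ} (ω : Fin (n + 3) → ℝ) (j : Fin (n + 3)) :
    cycleMatrix ω j (j + 1) = ω j := by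
  rw [cycleMatrix_apply, sum_eq_single j]
  · simp [edgeVec]
  · intro i _ hij
    by_contra! h
    simp only [ne_eq, mul_eq_zero, not_or] at h
    rcases edgeVec_apply_ne_zero h.2.1 with rfl | rfl
    · exact hij rfl
    rcases edgeVec_apply_ne_zero h.2.2 with h' | h'
    · exact Fin.add_one_add_one_ne i h'
    · exact hij (add_right_cancel h').symm
  · simp

theorem cycleMatrix_eq_zero_iff {n : ℕ} {ω : Fin (n + 3) → ℝ} : cycleMatrix ω = 0 ↔ ω = 0 := by
  refine ⟨fun h => funext fun j => ?_, fun h => ?_⟩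
  · rw [← cycleMatrix_apply_add_one ω j, h, Matrix.zero_apply, Pi.zero_apply]
  · simp [cycleMatrix, h]

section Tension
variable {ι : Type*} [Fintype ι]

theorem sum_sq_div_nonneg_of_sum_eq_zero {e y : ι → ℝ} {j : ι}
    (he : ∀ i ≠ j, 0 < e i) (hesum : ∑ i, e i = 0) (hysum : ∑ i, y i = 0) :
    0 ≤ ∑ i, y i ^ 2 / e i := by
  classical
  rw [← add_sum_erase _ _ (mem_univ j)] at hesum hysum ⊢
  have titu := sq_sum_div_le_sum_sq_div (univ.erase j) y fun i hi => he i (ne_of_mem_erase hi)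
  rw [eq_neg_of_add_eq_zero_right hesum, eq_neg_of_add_eq_zero_right hysum, neg_sq, div_neg] at titu
  linarith

theorem card_filter_neg_eq_one_of_mul_neg [Nonempty ι] {d ω : ι → ℝ} (hsum : ∑ i, d i = 0)
    (htension : ∀ i, ω i * d i < 0) (hω : ∀ i j, i ≠ j → ω i + ω j ≤ 0) :
    #{i | d i < 0} = 1 := by
  have hpos_iff : ∀ i, 0 < ω i ↔ d i < 0 := fun i => by
    rcases mul_neg_iff.mp (htension i) with ⟨h1, h2⟩ | ⟨h1, h2⟩ <;>
      constructor <;> intro <;> linarith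
  refine le_antisymm (card_le_one.mpr fun a ha b hb => ?_) (card_pos.mpr ?_)
  · by_contra hab
    have := hω a b hab
    simp only [mem_filter, mem_univ, true_and, ← hpos_iff] at ha hb
    linarith
  · obtain ⟨i₀⟩ := ‹Nonempty ι›
    obtain ⟨i, -, hi⟩ := exists_pos_of_sum_zero_of_exists_nonzero (-d) (by simp [hsum])
      ⟨i₀, mem_univ _, neg_ne_zero.mpr (right_ne_zero_of_mul (htension i₀).ne)⟩
    exact ⟨i, by simpa using hi⟩

theorem exists_psd_tension_of_card_filter_neg_eq_one {d : ι → ℝ} (hd : ∀ i, d i ≠ 0)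
    (hsum : ∑ i, d i = 0) (h : #{i | d i < 0} = 1) :
    ∃ ω : ι → ℝ, ω ≠ 0 ∧ (∀ i j, ω i * d i = ω j * d j) ∧
      ∀ g : ι → ℝ, ∑ i, g i = 0 → ∑ i, ω i * g i ^ 2 ≤ 0 := by
  obtain ⟨j, hj⟩ := card_eq_one.mp h
  have hneg_iff : ∀ i, d i < 0 ↔ i = j := fun i => by
    rw [← mem_singleton, ← hj, mem_filter, and_iff_right (mem_univ i)]
  refine ⟨fun i => -(d i)⁻¹, fun h0 => by simpa [hd j] using congrFun h0 j,
    fun i i' => by simp [hd], fun g hg => ?_⟩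
  have := sum_sq_div_nonneg_of_sum_eq_zero
    (fun i hi => (hd i).lt_or_gt.resolve_left (mt (hneg_iff i).mp hi)) hsum hg
  simpa [div_eq_inv_mul] using this

theorem exists_psd_tension_iff [DecidableEq ι] {d : ι → ℝ} (hd : ∀ i, d i ≠ 0)
    (hsum : ∑ i, d i = 0) :
    (∃ ω : ι → ℝ, ω ≠ 0 ∧ (∀ i j, ω i * d i = ω j * d j) ∧
      ∀ g : ι → ℝ, ∑ i, g i = 0 → ∑ i, ω i * g i ^ 2 ≤ 0) ↔
    #{i | d i < 0} = 1 ∨ #{i | 0 < d i} = 1 := by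
  have hsum' : ∑ i, (-d) i = 0 := by simp [hsum]
  constructor
  · rintro ⟨ω, hω0, htension, hpsd⟩
    obtain ⟨i₀, hi₀⟩ := Function.ne_iff.mp hω0
    have : Nonempty ι := ⟨i₀⟩
    -- `Pi.single i 1 - Pi.single j 1` is the edge difference of the indicator of an arc.
    have hpair : ∀ i j, i ≠ j → ω i + ω j ≤ 0 := fun i j hij => by
      have := hpsd _ (sum_single_sub_single i j)
      rwa [sum_mul_sq_single_sub_single ω hij] at this
    rcases (mul_ne_zero hi₀ (hd i₀)).lt_or_gt with hc | hc
    · exact .inl (card_filter_neg_eq_one_of_mul_neg hsum (fun i => htension i i₀ ▸ hc) hpair)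
    · refine .inr ?_
      simpa using card_filter_neg_eq_one_of_mul_neg hsum' (fun i => by simpa [htension i i₀]) hpair
  · rintro (h | h)
    · exact exists_psd_tension_of_card_filter_neg_eq_one hd hsum h
    · obtain ⟨ω, hω0, htension, hpsd⟩ := exists_psd_tension_of_card_filter_neg_eq_one
        (d := -d) (by simpa using hd) hsum' (by simpa using h)
      exact ⟨ω, hω0, fun i j => by simpa using htension i j, hpsd⟩

end Tension

section StressMatrix
variable {n : ℕ} {p : Fin (n + 3) → ℝ}

theorem isCycleStressMatrix_cycleMatrix_iff {ω : Fin (n + 3) → ℝ} :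
    IsCycleStressMatrix n p (cycleMatrix ω) ↔
      ∀ i j, ω i * cycleDiff p i = ω j * cycleDiff p j := by
  rw [← cycleMatrix_mulVec_eq_zero_iff]
  exact ⟨fun h => funext h.2.2.2, fun h => ⟨isHermitian_iff_isSymm.mpr (cycleMatrix_isSymm ω),
    fun _ _ => cycleMatrix_apply_ne_zero, sum_cycleMatrix_apply ω, congrFun h⟩⟩

theorem IsCycleStressMatrix.eq_cycleMatrix {Ω : Matrix (Fin (n + 3)) (Fin (n + 3)) ℝ}
    (h : IsCycleStressMatrix n p Ω) : Ω = cycleMatrix fun i => Ω i (i + 1) := by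
  obtain ⟨hherm, hsupp, hrow, -⟩ := h
  have hsymm := isHermitian_iff_isSymm.mp hherm
  refine Matrix.ext_of_sum_row_of_offDiag (fun j => by rw [hrow, sum_cycleMatrix_apply])
    fun j k hjk => ?_
  obtain rfl | h₁ := eq_or_ne k (j + 1)
  · rw [cycleMatrix_apply_add_one]
  obtain rfl | h₂ := eq_or_ne j (k + 1)
  · rw [← hsymm.apply, ← (cycleMatrix_isSymm _).apply, cycleMatrix_apply_add_one]
  have hΩ : Ω j k = 0 := by
    by_contra h
    rcases hsupp j k h with h | h | h <;> contradiction
  have hM : cycleMatrix (fun i => Ω i (i + 1)) j k = 0 := by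
    by_contra h
    rcases cycleMatrix_apply_ne_zero h with h | h | h <;> contradiction
  rw [hΩ, hM]

theorem exists_psd_isCycleStressMatrix_iff :
    (∃ Ω, Ω ≠ 0 ∧ IsCycleStressMatrix n p Ω ∧ Ω.PosSemidef) ↔
    ∃ ω : Fin (n + 3) → ℝ, ω ≠ 0 ∧ (∀ i j, ω i * cycleDiff p i = ω j * cycleDiff p j) ∧
      ∀ g : Fin (n + 3) → ℝ, ∑ i, g i = 0 → ∑ i, ω i * g i ^ 2 ≤ 0 := by
  constructor
  · rintro ⟨Ω, hΩ0, hΩ, hpsd⟩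
    obtain ⟨ω, rfl⟩ : ∃ ω, Ω = cycleMatrix ω := ⟨_, hΩ.eq_cycleMatrix⟩
    exact ⟨ω, mt cycleMatrix_eq_zero_iff.mpr hΩ0, isCycleStressMatrix_cycleMatrix_iff.mp hΩ,
      posSemidef_cycleMatrix_iff.mp hpsd⟩
  · rintro ⟨ω, hω0, htension, hpsd⟩
    exact ⟨cycleMatrix ω, mt cycleMatrix_eq_zero_iff.mp hω0,
      isCycleStressMatrix_cycleMatrix_iff.mpr htension, posSemidef_cycleMatrix_iff.mpr hpsd⟩

end StressMatrix

/-- A generic framework on the `(n+3)`-cycle in `ℝ¹` has a nonzero PSD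
equilibrium stress iff it is a stretched cycle, i.e. exactly one edge is backwards or
exactly one edge is forwards in the induced orientation. -/
theorem stmt9 (n : ℕ) (p : Fin (n + 3) → ℝ)
    (hgen : AlgebraicIndependent ℚ p) :
    (∃ Ω : Matrix (Fin (n + 3)) (Fin (n + 3)) ℝ,
        Ω ≠ 0 ∧ IsCycleStressMatrix n p Ω ∧ Ω.PosSemidef) ↔
    ((Finset.univ.filter fun i : Fin (n + 3) => p (i + 1) < p i).card = 1 ∨
     (Finset.univ.filter fun i : Fin (n + 3) => p i < p (i + 1)).card = 1) := by
  have hd : ∀ i, cycleDiff p i ≠ 0 := fun i =>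
    sub_ne_zero.mpr (hgen.injective.ne (by simp))
  rw [exists_psd_isCycleStressMatrix_iff, exists_psd_tension_iff hd (sum_cycleDiff p)]
  simp only [cycleDiff, sub_neg, sub_pos]
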